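/- Every vertex of Hom(C̄_{2r+1}, K_{r+1}) lies in exactly two edges of Hom(C̄_{2r+1}, K_{r+1}); i.e., for each proper (r+1)-coloring φ of C̄_{2r+1} there are exactly two multi-colorings (A_1,...,A_{2r+1}) of dimension 1 extending φ. -/

import Mathlib

/-!
The cycle `C_{2r+1}` is triangle-free, so every colour class of `φ`, being a clique of the cycle,
has at most two vertices; since `2r+1` vertices carry `r+1` colours, exactly one vertex `v` has a
colour of its own and every other colour is used twice. An edge through `φ` adds one colour `c` at
one vertex `w`. Disjointness forces all `c`-coloured vertices to be cycle-neighbours of `w`; a clique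
inside a neighbourhood of a triangle-free graph is a single vertex, so `c` is the colour of `v` and
`w` is adjacent to `v`. Conversely each of the two neighbours `w` of `v` gives an edge.
-/

open Finset

/-- `A` is a cell of `Hom(C̄_{2r+1}, K_{r+1})`. -/
def IsCellOdd (r : ℕ) (A : Fin (2 * r + 1) → Finset (Fin (r + 1))) : Prop :=
  (∀ i, (A i).Nonempty) ∧
    ∀ i j, (SimpleGraph.cycleGraph (2 * r + 1))ᶜ.Adj i j → Disjoint (A i) (A j)

theorem Fintype.exists_eq_pi_single_of_sum_eq_one {ι : Type*} [Fintype ι] [DecidableEq ι]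
    {f : ι → ℕ} (h : ∑ i, f i = 1) : ∃ i, f = Pi.single i 1 := by
  obtain ⟨i, -, hi⟩ := exists_ne_zero_of_sum_ne_zero (h ▸ one_ne_zero)
  have hrest : ∑ j ∈ univ.erase i, f j = 0 := by
    have := add_sum_erase univ f (mem_univ i)
    omega
  refine ⟨i, funext fun j => ?_⟩
  rcases eq_or_ne j i with rfl | hj
  · have := add_sum_erase univ f (mem_univ j)
    rw [Pi.single_eq_same]
    omega
  · rw [Pi.single_eq_of_ne hj]
    exact sum_eq_zero_iff.mp hrest j (mem_erase.mpr ⟨hj, mem_univ j⟩)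

theorem Fintype.exists_singleton_fiber_of_card_fiber_le_two {V α : Type*} [Fintype V]
    [Fintype α] [DecidableEq α] {φ : V → α} (hφ : ∀ c, #{i | φ i = c} ≤ 2)
    (hcard : Fintype.card V + 1 = 2 * Fintype.card α) :
    ∃ v, (∀ y, φ y = φ v → y = v) ∧ ∀ c ≠ φ v, 2 ≤ #{i | φ i = c} := by
  -- the deficits `2 - |φ⁻¹ c|` add up to `2|α| - |V| = 1`
  have hdef : ∑ c, (2 - #{i | φ i = c}) = 1 := by
    have hsplit : ∑ c, (2 - #{i | φ i = c}) + ∑ c, #{i | φ i = c} = 2 * Fintype.card α := by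
      rw [← sum_add_distrib, Finset.sum_congr rfl fun c _ => Nat.sub_add_cancel (hφ c)]
      simp [mul_comm]
    rw [← card_eq_sum_card_fiberwise fun i _ => mem_univ (φ i), card_univ] at hsplit
    omega
  obtain ⟨c₀, hc₀⟩ := Fintype.exists_eq_pi_single_of_sum_eq_one hdef
  have hfib (c) : #{i | φ i = c} = if c = c₀ then 1 else 2 := by
    have h := congrFun hc₀ c
    have := hφ c
    rw [Pi.single_apply] at h
    split_ifs at * <;> omega
  obtain ⟨v, hv⟩ := card_eq_one.mp ((hfib c₀).trans (if_pos rfl))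
  obtain ⟨hφv, huniq⟩ := eq_singleton_iff_unique_mem.mp hv
  simp only [mem_filter, mem_univ, true_and] at hφv huniq
  refine ⟨v, fun y hy => huniq y (hy.trans hφv), fun c hc => ?_⟩
  rw [hfib c, if_neg (hφv ▸ hc)]

def addColor {V α : Type*} [DecidableEq V] [DecidableEq α] (φ : V → α) (w : V) (c : α) :
    V → Finset α :=
  Function.update (fun i => {φ i}) w {φ w, c}

section addColor

variable {V α : Type*} [DecidableEq V] [DecidableEq α] {φ : V → α} {w i : V} {c : α}

theorem addColor_self : addColor φ w c w = {φ w, c} := Function.update_self ..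

theorem addColor_of_ne (h : i ≠ w) : addColor φ w c i = {φ i} := Function.update_of_ne h ..

theorem mem_addColor : φ i ∈ addColor φ w c i := by
  rcases eq_or_ne i w with rfl | h
  · simp [addColor_self]
  · simp [addColor_of_ne h]

theorem sum_card_addColor [Fintype V] (hc : c ≠ φ w) :
    ∑ i, (addColor φ w c i).card = Fintype.card V + 1 := by
  rw [← add_sum_erase univ _ (mem_univ w), addColor_self, card_pair hc.symm,
    sum_congr rfl fun i hi => by rw [addColor_of_ne (ne_of_mem_erase hi), card_singleton]]
  have := Fintype.card_pos_iff.mpr ⟨w⟩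
  simp only [sum_const, card_erase_of_mem (mem_univ w), card_univ, smul_eq_mul, mul_one]
  omega

theorem eq_of_addColor_eq {w' : V} {c' : α} (hc : c ≠ φ w)
    (h : addColor φ w c = addColor φ w' c') : w = w' := by
  by_contra hw
  have := congrFun h w
  rw [addColor_self, addColor_of_ne hw] at this
  exact hc (by simpa using this.subset (mem_insert_of_mem (mem_singleton_self c)))

theorem exists_eq_addColor [Fintype V] {A : V → Finset α} (hφA : ∀ i, φ i ∈ A i)
    (hsum : ∑ i, (A i).card = Fintype.card V + 1) : ∃ w c, c ≠ φ w ∧ A = addColor φ w c := by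
  have hpos (i) : 1 ≤ (A i).card := card_pos.mpr ⟨_, hφA i⟩
  obtain ⟨w, hw⟩ : ∃ w, (fun i => (A i).card - 1) = Pi.single w 1 := by
    refine Fintype.exists_eq_pi_single_of_sum_eq_one ?_
    have := sum_congr rfl fun i (_ : i ∈ univ) => Nat.sub_add_cancel (hpos i)
    rw [sum_add_distrib] at this
    simp only [sum_const, card_univ, smul_eq_mul, mul_one] at this
    omega
  have hcard (i) : (A i).card = if i = w then 2 else 1 := by
    have := congrFun hw i
    have := hpos i
    simp only [Pi.single_apply] at *
    split_ifs at * <;> omega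
  obtain ⟨c, hc⟩ := card_eq_one.mp (show ((A w).erase (φ w)).card = 1 by
    rw [card_erase_of_mem (hφA w), hcard, if_pos rfl])
  refine ⟨w, c, ne_of_mem_erase (hc ▸ mem_singleton_self c), funext fun i => ?_⟩
  rcases eq_or_ne i w with rfl | h
  · rw [addColor_self, ← hc, insert_erase (hφA i)]
  · rw [addColor_of_ne h]
    exact (eq_of_subset_of_card_le (singleton_subset_iff.mpr (hφA i))
      (by rw [hcard, if_neg h, card_singleton])).symm

end addColor

namespace SimpleGraph

variable {V α : Type*} {G : SimpleGraph V} {φ : V → α}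

/-- The cells of the Hom complex `Hom(H, K_α)`. -/
def IsHomCell (H : SimpleGraph V) (A : V → Finset α) : Prop :=
  (∀ i, (A i).Nonempty) ∧ ∀ i j, H.Adj i j → Disjoint (A i) (A j)

theorem adj_of_map_eq (hφ : ∀ a b, Gᶜ.Adj a b → φ a ≠ φ b) {x y : V} (hxy : x ≠ y)
    (h : φ x = φ y) : G.Adj x y := by
  by_contra hG
  exact hφ x y ((compl_adj G x y).mpr ⟨hxy, hG⟩) h

theorem card_fiber_le_two [Fintype V] [DecidableEq α] (hG : G.CliqueFree 3)
    (hφ : ∀ a b, Gᶜ.Adj a b → φ a ≠ φ b) (c : α) : #{i | φ i = c} ≤ 2 := by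
  classical
  by_contra! h
  obtain ⟨x, hx, y, hy, z, hz, hxy, hxz, hyz⟩ := two_lt_card.mp h
  simp only [mem_filter, mem_univ, true_and] at hx hy hz
  exact hG {x, y, z} (is3Clique_triple_iff.mpr ⟨adj_of_map_eq hφ hxy (hx.trans hy.symm),
    adj_of_map_eq hφ hxz (hx.trans hz.symm), adj_of_map_eq hφ hyz (hy.trans hz.symm)⟩)

theorem eq_of_adj_of_map_eq (hG : G.CliqueFree 3) (hφ : ∀ a b, Gᶜ.Adj a b → φ a ≠ φ b)
    {w x y : V} (hx : G.Adj w x) (hy : G.Adj w y) (h : φ x = φ y) : x = y := by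
  by_contra hxy
  exact isIndepSet_neighborSet_of_triangleFree G hG w hx hy hxy (adj_of_map_eq hφ hxy h)

variable [DecidableEq V] [DecidableEq α]

theorem isHomCell_compl_addColor_iff (hφ : ∀ a b, Gᶜ.Adj a b → φ a ≠ φ b) {w : V} {c : α} :
    IsHomCell Gᶜ (addColor φ w c) ↔ ∀ j, Gᶜ.Adj w j → φ j ≠ c := by
  constructor
  · rintro ⟨-, h⟩ j hwj rfl
    have := h w j hwj
    rw [addColor_self, addColor_of_ne hwj.ne.symm] at this
    exact Finset.disjoint_left.mp this (mem_insert_of_mem (mem_singleton_self _))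
      (mem_singleton_self _)
  · intro h
    have key (i j) (hij : Gᶜ.Adj i j) (hj : j ≠ w) :
        Disjoint (addColor φ w c i) (addColor φ w c j) := by
      rw [addColor_of_ne hj, disjoint_singleton_right]
      rcases eq_or_ne i w with rfl | hi
      · simpa [addColor_self] using ⟨(hφ i j hij).symm, h j hij⟩
      · simpa [addColor_of_ne hi] using (hφ i j hij).symm
    refine ⟨fun i => ⟨_, mem_addColor⟩, fun i j hij => ?_⟩
    rcases eq_or_ne j w with rfl | hj
    · exact (key j i hij.symm hij.ne).symm
    · exact key i j hij hj

theorem isHomCell_compl_addColor_iff_of_cliqueFree [Fintype V] (hG : G.CliqueFree 3)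
    (hφ : ∀ a b, Gᶜ.Adj a b → φ a ≠ φ b) {v : V} (hv : ∀ y, φ y = φ v → y = v)
    (hfib : ∀ c ≠ φ v, 2 ≤ #{i | φ i = c}) {w : V} {c : α} (hc : c ≠ φ w) :
    IsHomCell Gᶜ (addColor φ w c) ↔ c = φ v ∧ G.Adj v w := by
  rw [isHomCell_compl_addColor_iff hφ]
  have hcompl {j} : Gᶜ.Adj w j ↔ j ≠ w ∧ ¬G.Adj w j := by rw [compl_adj, ne_comm]
  constructor
  · intro h
    have hadj {j} (hj : φ j = c) : G.Adj w j := by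
      by_contra hwj
      exact h j (hcompl.mpr ⟨fun e => hc (e ▸ hj.symm), hwj⟩) hj
    have hcv : c = φ v := by
      by_contra hcv
      obtain ⟨x, hx, y, hy, hxy⟩ := one_lt_card.mp (hfib c hcv)
      simp only [mem_filter, mem_univ, true_and] at hx hy
      exact hxy (eq_of_adj_of_map_eq hG hφ (hadj hx) (hadj hy) (hx.trans hy.symm))
    exact ⟨hcv, (hadj hcv.symm).symm⟩
  · rintro ⟨rfl, hvw⟩ j hwj hj
    exact (hcompl.mp (hv j hj ▸ hwj)).2 hvw.symm

theorem card_homCell_eq_degree [Fintype V] [DecidableRel G.Adj] (hG : G.CliqueFree 3)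
    (hφ : ∀ a b, Gᶜ.Adj a b → φ a ≠ φ b) {v : V} (hv : ∀ y, φ y = φ v → y = v)
    (hfib : ∀ c ≠ φ v, 2 ≤ #{i | φ i = c}) :
    Nat.card {A : V → Finset α //
      IsHomCell Gᶜ A ∧ ∑ i, (A i).card = Fintype.card V + 1 ∧ ∀ i, φ i ∈ A i} = G.degree v := by
  have hne {w : V} (hw : G.Adj v w) : φ v ≠ φ w := fun h => hw.ne (hv w h.symm).symm
  let e : G.neighborSet v → {A : V → Finset α //
      IsHomCell Gᶜ A ∧ ∑ i, (A i).card = Fintype.card V + 1 ∧ ∀ i, φ i ∈ A i} := fun w =>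
    ⟨addColor φ w (φ v),
      (isHomCell_compl_addColor_iff_of_cliqueFree hG hφ hv hfib (hne w.2)).mpr ⟨rfl, w.2⟩,
      sum_card_addColor (hne w.2), fun _ => mem_addColor⟩
  have he : Function.Bijective e := by
    refine ⟨fun w w' h => Subtype.ext (eq_of_addColor_eq (hne w.2) congr($h.1)), ?_⟩
    rintro ⟨A, hA, hsum, hφA⟩
    obtain ⟨w, c, hc, rfl⟩ := exists_eq_addColor hφA hsum
    obtain ⟨rfl, hvw⟩ := (isHomCell_compl_addColor_iff_of_cliqueFree hG hφ hv hfib hc).mp hA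
    exact ⟨⟨w, hvw⟩, rfl⟩
  rw [← Nat.card_congr (Equiv.ofBijective e he), Nat.card_eq_fintype_card,
    card_neighborSet_eq_degree]

theorem cycleGraph_cliqueFree_three {n : ℕ} (hn : 4 ≤ n) : (cycleGraph n).CliqueFree 3 := by
  obtain ⟨m, rfl⟩ : ∃ m, n = m + 4 := ⟨n - 4, by omega⟩
  intro s hs
  obtain ⟨a, b, c, hab, hac, hbc, rfl⟩ := is3Clique_iff.mp hs
  rw [cycleGraph_adj] at hab hac hbc
  -- `b - a`, `c - a` and `c - b` are all `±1`, which forces `1 = 0` or `3 = 0`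
  have h1 : (1 : Fin (m + 4)) ≠ 0 := by simp
  have h3 : (3 : Fin (m + 4)) ≠ 0 := by
    simp [Fin.ext_iff, Nat.mod_eq_of_lt (show 3 < m + 4 by omega)]
  grind

theorem cycleGraph_degree {n : ℕ} (hn : 3 ≤ n) (v : Fin n) : (cycleGraph n).degree v = 2 := by
  obtain ⟨m, rfl⟩ : ∃ m, n = m + 3 := ⟨n - 3, by omega⟩
  exact cycleGraph_degree_three_le

end SimpleGraph

/-- Every vertex of `Hom(C̄_{2r+1}, K_{r+1})` lies in exactly two edges: for
each proper `(r+1)`-coloring `φ` of `C̄_{2r+1}` there are exactly two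
multi-colorings `(A₁,…,A_{2r+1})` of dimension 1 (i.e. `Σ|Aᵢ| = 2r+2`)
extending `φ`. -/
theorem homOddCycle_vertex_in_two_edges (r : ℕ) (hr : 2 ≤ r)
    (φ : Fin (2 * r + 1) → Fin (r + 1))
    (hφ : ∀ a b, (SimpleGraph.cycleGraph (2 * r + 1))ᶜ.Adj a b → φ a ≠ φ b) :
    Nat.card {A : Fin (2 * r + 1) → Finset (Fin (r + 1)) //
      IsCellOdd r A ∧ (∑ i, (A i).card) = 2 * r + 2 ∧ ∀ i, φ i ∈ A i} = 2 := by
  have hG := SimpleGraph.cycleGraph_cliqueFree_three (n := 2 * r + 1) (by omega)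
  obtain ⟨v, hv, hfib⟩ := Fintype.exists_singleton_fiber_of_card_fiber_le_two
    (SimpleGraph.card_fiber_le_two hG hφ) (by simp only [Fintype.card_fin]; ring)
  rw [show 2 * r + 2 = Fintype.card (Fin (2 * r + 1)) + 1 by simp]
  exact (SimpleGraph.card_homCell_eq_degree hG hφ hv hfib).trans
    (SimpleGraph.cycleGraph_degree (by omega) v)
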